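/- arXiv:1609.09162 — 5 statements merged into one kernel-verified Lean document; each statement's English description precedes it below -/
import Mathlib

section
/- Let N, L be positive natural numbers, K ∈ ℝ^{N×N} a symmetric matrix, y : {1,…,N} → {1,…,L}, e ∈ ℝ^{N×L}, and fix an index t ∈ {1,…,N} with e_{tl} = 1 − δ_{l,y_t} for all l (δ the Kronecker delta). Let α, γ ∈ ℝ^{N×L} satisfy: Σ_{l=1}^L γ_{il} = 0 for every i; and for every i ≠ t there exists a constant c_i ∈ ℝ such that Σ_{j=1}^N α_{jl} K_{ij} + e_{il} = c_i for every l with γ_{il} ≠ 0. Then Σ_{i=1}^N Σ_{l=1}^L γ_{il}·(Σ_{j=1}^N α_{jl} K_{ij} + e_{il}) = Σ_{l=1}^L γ_{tl}·(Σ_{j=1}^N α_{jl} K_{tj}) − γ_{t,y_t}. -/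
open Finset

theorem Finset.sum_mul_eq_zero_of_eq_const_on_support {ι R : Type*} [NonUnitalNonAssocSemiring R]
    {s : Finset ι} {g f : ι → R} {c : R} (hg : ∑ l ∈ s, g l = 0)
    (hf : ∀ l ∈ s, g l ≠ 0 → f l = c) :
    ∑ l ∈ s, g l * f l = 0 := by
  have hgc : ∀ l ∈ s, g l * f l = g l * c := by
    intro l hl
    by_cases hgl : g l = 0
    · simp [hgl]
    · rw [hf l hl hgl]
  rw [sum_congr rfl hgc, ← sum_mul, hg, zero_mul]

theorem Finset.sum_mul_one_sub_ite_eq {ι R : Type*} [Fintype ι] [DecidableEq ι] [Ring R]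
    (g : ι → R) (k : ι) :
    ∑ l, g l * (1 - if l = k then 1 else 0) = ∑ l, g l - g k := by
  simp only [mul_sub, mul_one, mul_ite, mul_zero, sum_sub_distrib, sum_ite_eq', mem_univ, if_true]

theorem stmt_1_general {N L : ℕ}
    (K : Matrix (Fin N) (Fin N) ℝ)
    (y : Fin N → Fin L) (e : Fin N → Fin L → ℝ) (t : Fin N)
    (he : ∀ l, e t l = 1 - (if l = y t then (1 : ℝ) else 0))
    (α γ : Fin N → Fin L → ℝ)
    (hsum : ∀ i, ∑ l, γ i l = 0)
    (hconst : ∀ i, i ≠ t → ∃ c : ℝ, ∀ l, γ i l ≠ 0 → (∑ j, α j l * K i j) + e i l = c) :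
    ∑ i, ∑ l, γ i l * ((∑ j, α j l * K i j) + e i l)
      = (∑ l, γ t l * (∑ j, α j l * K t j)) - γ t (y t) := by
  have hrow_zero : ∀ i, i ≠ t → ∑ l, γ i l * ((∑ j, α j l * K i j) + e i l) = 0 := by
    intro i hi
    obtain ⟨c, hc⟩ := hconst i hi
    exact sum_mul_eq_zero_of_eq_const_on_support (hsum i) fun l _ => hc l
  rw [sum_eq_single t (fun i _ hi => hrow_zero i hi) (by simp)]
  simp only [he, mul_add, sum_add_distrib]
  rw [sum_mul_one_sub_ite_eq, hsum t, zero_sub, sub_eq_add_neg]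

/-- Reduction step (final equality in equations (11) and (13)) in the proof of
Theorem 1 of the MU-SVM span-bound derivation. -/
theorem stmt_1 {N L : ℕ} (hN : 0 < N) (hL : 0 < L)
    (K : Matrix (Fin N) (Fin N) ℝ) (hK : K.IsSymm)
    (y : Fin N → Fin L) (e : Fin N → Fin L → ℝ) (t : Fin N)
    (he : ∀ l, e t l = 1 - (if l = y t then (1 : ℝ) else 0))
    (α γ : Fin N → Fin L → ℝ)
    (hsum : ∀ i, ∑ l, γ i l = 0)
    (hconst : ∀ i, i ≠ t → ∃ c : ℝ, ∀ l, γ i l ≠ 0 → (∑ j, α j l * K i j) + e i l = c) :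
    ∑ i, ∑ l, γ i l * ((∑ j, α j l * K i j) + e i l)
      = (∑ l, γ t l * (∑ j, α j l * K t j)) - γ t (y t) :=
  stmt_1_general K y e t he α γ hsum hconst
end

section
/- Let N, L be positive natural numbers, K ∈ ℝ^{N×N} a symmetric matrix, y : {1,…,N} → {1,…,L}, e ∈ ℝ^{N×L}, and fix t ∈ {1,…,N} with e_{tl} = 1 − δ_{l,y_t} for all l. Let α, α' ∈ ℝ^{N×L} satisfy Σ_{l=1}^L α_{il} = 0 and Σ_{l=1}^L α'_{il} = 0 for every i, and α'_{tl} = 0 for every l; set β := α − α'. Suppose that for every i ≠ t there exist constants c_i, c'_i ∈ ℝ such that Σ_{j=1}^N α_{jl} K_{ij} + e_{il} = c_i and Σ_{j=1}^N α'_{jl} K_{ij} + e_{il} = c'_i for every l with β_{il} ≠ 0. Then Σ_{i,j=1}^N (Σ_{l=1}^L β_{il} β_{jl}) K_{ij} = Σ_{l=1}^L α_{tl}·Σ_{j=1}^N (α_{jl} − α'_{jl}) K_{tj}. -/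
/-!
Expanding the quadratic form row by row, `βᵀKβ = ∑ᵢ ∑ₗ βᵢₗ (Kβ)ᵢₗ`. For `i ≠ t` the vector
`(Kβ)ᵢ = (Kα)ᵢ − (Kα')ᵢ` is constant (`= cᵢ − c'ᵢ`) on the support of the row `βᵢ`, whose entries
sum to zero, so the row contributes nothing. Only row `t` survives, and there `β_t = α_t`.
-/

open Finset

theorem Finset.sum_mul_eq_zero_of_eq_on_support {ι R : Type*} [CommRing R] (s : Finset ι)
    {b g : ι → R} {c : R} (hb : ∑ l ∈ s, b l = 0) (hg : ∀ l ∈ s, b l ≠ 0 → g l = c) :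
    ∑ l ∈ s, b l * g l = 0 :=
  calc ∑ l ∈ s, b l * g l = ∑ l ∈ s, b l * c := by
        refine sum_congr rfl fun l hl => ?_
        by_cases hbl : b l = 0
        · simp [hbl]
        · rw [hg l hl hbl]
    _ = 0 := by rw [← sum_mul, hb, zero_mul]

theorem Finset.sum_sum_sum_mul_mul_eq_sum_sum_mul_sum {ι κ R : Type*} [Fintype ι] [Fintype κ]
    [CommSemiring R] (b : ι → κ → R) (K : Matrix ι ι R) :
    ∑ i, ∑ j, (∑ l, b i l * b j l) * K i j = ∑ i, ∑ l, b i l * ∑ j, b j l * K i j := by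
  refine sum_congr rfl fun i _ => ?_
  simp only [sum_mul, mul_sum]
  rw [sum_comm]
  exact sum_congr rfl fun l _ => sum_congr rfl fun j _ => by ring

theorem stmt_2_general {N L : ℕ}
    (K : Matrix (Fin N) (Fin N) ℝ)
    (e : Fin N → Fin L → ℝ) (t : Fin N)
    (α α' : Fin N → Fin L → ℝ)
    (hα : ∀ i, ∑ l, α i l = 0) (hα' : ∀ i, ∑ l, α' i l = 0)
    (hα't : ∀ l, α' t l = 0)
    (β : Fin N → Fin L → ℝ) (hβ : ∀ i l, β i l = α i l - α' i l)
    (hconst : ∀ i, i ≠ t → ∃ c c' : ℝ, ∀ l, β i l ≠ 0 →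
        ((∑ j, α j l * K i j) + e i l = c) ∧ ((∑ j, α' j l * K i j) + e i l = c')) :
    ∑ i, ∑ j, (∑ l, β i l * β j l) * K i j
      = ∑ l, α t l * (∑ j, (α j l - α' j l) * K t j) := by
  have hβsum : ∀ i, ∑ l, β i l = 0 := fun i => by
    simp only [hβ, sum_sub_distrib, hα, hα', sub_zero]
  have hrow : ∀ i, i ≠ t → ∑ l, β i l * ∑ j, β j l * K i j = 0 := by
    intro i hi
    obtain ⟨c, c', hc⟩ := hconst i hi
    refine sum_mul_eq_zero_of_eq_on_support _ (c := c - c') (hβsum i) fun l _ hl => ?_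
    obtain ⟨hcl, hc'l⟩ := hc l hl
    simp only [hβ, sub_mul, sum_sub_distrib]
    linarith
  rw [sum_sum_sum_mul_mul_eq_sum_sum_mul_sum,
    sum_eq_single t (fun i _ => hrow i) (fun ht => absurd (mem_univ t) ht)]
  simp only [hβ, hα't, sub_zero]

/-- Equation (14) in the proof of Theorem 1 of the MU-SVM paper:
equating `I₁ = W(α'+β) − W(α')` and `I₂ = W(α) − W(α−β)` for `β = α − α'`. -/
theorem stmt_2 {N L : ℕ} (hN : 0 < N) (hL : 0 < L)
    (K : Matrix (Fin N) (Fin N) ℝ) (hK : K.IsSymm)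
    (y : Fin N → Fin L) (e : Fin N → Fin L → ℝ) (t : Fin N)
    (he : ∀ l, e t l = 1 - (if l = y t then (1 : ℝ) else 0))
    (α α' : Fin N → Fin L → ℝ)
    (hα : ∀ i, ∑ l, α i l = 0) (hα' : ∀ i, ∑ l, α' i l = 0)
    (hα't : ∀ l, α' t l = 0)
    (β : Fin N → Fin L → ℝ) (hβ : ∀ i l, β i l = α i l - α' i l)
    (hconst : ∀ i, i ≠ t → ∃ c c' : ℝ, ∀ l, β i l ≠ 0 →
        ((∑ j, α j l * K i j) + e i l = c) ∧ ((∑ j, α' j l * K i j) + e i l = c')) :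
    ∑ i, ∑ j, (∑ l, β i l * β j l) * K i j
      = ∑ l, α t l * (∑ j, (α j l - α' j l) * K t j) :=
  stmt_2_general K e t α α' hα hα' hα't β hβ hconst
end

section
/- Let N, L be positive natural numbers, K ∈ ℝ^{N×N} symmetric positive semidefinite, y : {1,…,N} → {1,…,L}, C : {1,…,N} → ℝ, e ∈ ℝ^{N×L}, and fix t with e_{tl} = 1 − δ_{l,y_t} for all l. Let D = {α ∈ ℝ^{N×L} : Σ_l α_{il} = 0 ∀i, α_{i,y_i} ≤ C_i ∀i, α_{il} ≤ 0 ∀i ∀l ≠ y_i}, W(α) = −(1/2)Σ_{i,j}Σ_l α_{il}α_{jl}K_{ij} − Σ_{i,l}α_{il}e_{il}. Suppose α maximizes W over D, α^t maximizes W over D^t := {α' ∈ D : α'_{tl} = 0 ∀l}, and t ∈ SV₁ := {i : 0 < α_{i,y_i} < C_i}. Assume: (i) β := α − α^t satisfies β_{il} = 0 for every i ∉ SV₁, and β attains the minimum in the span problem S_t² := min{ Σ_{i,j}(Σ_l β'_{il}β'_{jl})K_{ij} : β' ∈ ℝ^{N×L}, β'_{tl} = α_{tl} ∀l, Σ_l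 β'_{il} = 0 ∀i, β'_{il} = 0 ∀i ∉ SV₁ } (Assumption 1); (ii) for every i ≠ t there exist constants c_i, c_i^t ∈ ℝ with Σ_j α_{jl}K_{ij} + e_{il} = c_i and Σ_j α^t_{jl}K_{ij} + e_{il} = c_i^t for every l with β_{il} ≠ 0 (a consequence of Assumption 2). Then S_t² = Σ_{l=1}^L α_{tl}·Σ_{i=1}^N (α_{il} − α^t_{il}) K_{it}. -/
/-!
Expand the span quadratic form of `β = α - αt` row by row: row `i` contributes
`Σ_l β_il (Σ_j β_jl K_ij)`. For `i ≠ t` the inner sum is the difference `c_i - c_i^t` of the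
constant KKT margins wherever `β_il ≠ 0`, so the row contributes `(c_i - c_i^t) Σ_l β_il = 0`,
the rows of both dual solutions summing to zero. Only row `t` survives, and there `β_t = α_t`
because the leave-one-out solution vanishes on row `t`.
-/

open Finset

section

variable {ι κ R : Type*} [Fintype ι] [Fintype κ]

theorem sum_mul_eq_zero_of_sum_eq_zero_of_eqOn_support [CommSemiring R] {b g : κ → R} {c : R}
    (hb : ∑ l, b l = 0) (hg : ∀ l, b l ≠ 0 → g l = c) : ∑ l, b l * g l = 0 := by
  calc ∑ l, b l * g l = ∑ l, b l * c := by
        refine sum_congr rfl fun l _ => ?_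
        by_cases hl : b l = 0
        · simp [hl]
        · rw [hg l hl]
    _ = 0 := by rw [← sum_mul, hb, zero_mul]

theorem sum_gram_mul_eq_sum_mul_sum [CommSemiring R] (β : ι → κ → R)
    (K : Matrix ι ι R) (i : ι) :
    ∑ j, (∑ l, β i l * β j l) * K i j = ∑ l, β i l * ∑ j, β j l * K i j := by
  simp_rw [sum_mul, mul_sum]
  rw [sum_comm]
  exact sum_congr rfl fun l _ => sum_congr rfl fun j _ => by ring

theorem sum_gram_mul_eq_zero_of_margins_const [CommRing R] {α αt : ι → κ → R}
    (K : Matrix ι ι R) (e : ι → κ → R) {i : ι}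
    (hα : ∑ l, α i l = 0) (hαt : ∑ l, αt i l = 0) {c ct : R}
    (hconst : ∀ l, α i l - αt i l ≠ 0 →
      (∑ j, α j l * K i j) + e i l = c ∧ (∑ j, αt j l * K i j) + e i l = ct) :
    ∑ j, (∑ l, (α i l - αt i l) * (α j l - αt j l)) * K i j = 0 := by
  rw [sum_gram_mul_eq_sum_mul_sum (fun i l => α i l - αt i l)]
  refine sum_mul_eq_zero_of_sum_eq_zero_of_eqOn_support (c := c - ct)
    (by rw [sum_sub_distrib, hα, hαt, sub_zero]) fun l hl => ?_
  obtain ⟨hc, hct⟩ := hconst l hl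
  simp only [sub_mul, sum_sub_distrib]
  linear_combination hc - hct

end

theorem stmt_3_general {N L : ℕ}
    (K : Matrix (Fin N) (Fin N) ℝ) (hK : K.PosSemidef)
    (y : Fin N → Fin L) (C : Fin N → ℝ) (e : Fin N → Fin L → ℝ) (t : Fin N)
    (D : Set (Fin N → Fin L → ℝ))
    (hD : D = {a | (∀ i, ∑ l, a i l = 0) ∧ (∀ i, a i (y i) ≤ C i) ∧
      ∀ i, ∀ l, l ≠ y i → a i l ≤ 0})
    (α αt : Fin N → Fin L → ℝ)
    (hα : α ∈ D)
    (hαtD : αt ∈ D) (hαtzero : ∀ l, αt t l = 0)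
    (β : Fin N → Fin L → ℝ) (hβ : ∀ i l, β i l = α i l - αt i l)
    (St2 : ℝ)
    (hattain : St2 = ∑ i, ∑ j, (∑ l, β i l * β j l) * K i j)
    (hconst : ∀ i, i ≠ t → ∃ c ct : ℝ, ∀ l, β i l ≠ 0 →
        ((∑ j, α j l * K i j) + e i l = c) ∧ ((∑ j, αt j l * K i j) + e i l = ct)) :
    St2 = ∑ l, α t l * (∑ i, (α i l - αt i l) * K i t) := by
  subst hD
  simp only [hβ] at hattain hconst
  have hrow : ∀ i ≠ t, ∑ j, (∑ l, (α i l - αt i l) * (α j l - αt j l)) * K i j = 0 := by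
    intro i hi
    obtain ⟨c, ct, hc⟩ := hconst i hi
    exact sum_gram_mul_eq_zero_of_margins_const K e (hα.1 i) (hαtD.1 i) hc
  rw [hattain, sum_eq_single_of_mem t (mem_univ t) fun i _ hi => hrow i hi,
    sum_gram_mul_eq_sum_mul_sum (fun i l => α i l - αt i l)]
  have hKsymm : K.IsSymm := Matrix.isHermitian_iff_isSymm.mp hK.isHermitian
  simp only [hαtzero, sub_zero, hKsymm.apply t]

/-- Theorem 1 of the MU-SVM paper: the span `S_t²` of a Type-1 support vector `t`
of the MU-SVM dual solution `α`, compared with the leave-one-out solution `αt`,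
satisfies `S_t² = Σ_l α_{tl} Σ_i (α_{il} − αt_{il}) K_{it}`. -/
theorem stmt_3 {N L : ℕ} (hN : 0 < N) (hL : 0 < L)
    (K : Matrix (Fin N) (Fin N) ℝ) (hK : K.PosSemidef)
    (y : Fin N → Fin L) (C : Fin N → ℝ) (e : Fin N → Fin L → ℝ) (t : Fin N)
    (he : ∀ l, e t l = 1 - (if l = y t then (1 : ℝ) else 0))
    (D : Set (Fin N → Fin L → ℝ))
    (hD : D = {a | (∀ i, ∑ l, a i l = 0) ∧ (∀ i, a i (y i) ≤ C i) ∧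
      ∀ i, ∀ l, l ≠ y i → a i l ≤ 0})
    (W : (Fin N → Fin L → ℝ) → ℝ)
    (hW : ∀ a : Fin N → Fin L → ℝ,
      W a = -(1/2) * (∑ i, ∑ j, ∑ l, a i l * a j l * K i j) - ∑ i, ∑ l, a i l * e i l)
    (α αt : Fin N → Fin L → ℝ)
    (hα : α ∈ D) (hαmax : ∀ a ∈ D, W a ≤ W α)
    (hαtD : αt ∈ D) (hαtzero : ∀ l, αt t l = 0)
    (hαtmax : ∀ a ∈ D, (∀ l, a t l = 0) → W a ≤ W αt)
    (SV1 : Set (Fin N)) (hSV1 : SV1 = {i | 0 < α i (y i) ∧ α i (y i) < C i})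
    (htSV1 : t ∈ SV1)
    (β : Fin N → Fin L → ℝ) (hβ : ∀ i l, β i l = α i l - αt i l)
    (hβ0 : ∀ i ∉ SV1, ∀ l, β i l = 0)
    (St2 : ℝ)
    (hSt2 : IsLeast {s : ℝ | ∃ β' : Fin N → Fin L → ℝ,
        (∀ l, β' t l = α t l) ∧ (∀ i, ∑ l, β' i l = 0) ∧ (∀ i ∉ SV1, ∀ l, β' i l = 0) ∧
        s = ∑ i, ∑ j, (∑ l, β' i l * β' j l) * K i j} St2)
    (hattain : St2 = ∑ i, ∑ j, (∑ l, β i l * β j l) * K i j)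
    (hconst : ∀ i, i ≠ t → ∃ c ct : ℝ, ∀ l, β i l ≠ 0 →
        ((∑ j, α j l * K i j) + e i l = c) ∧ ((∑ j, αt j l * K i j) + e i l = ct)) :
    St2 = ∑ l, α t l * (∑ i, (α i l - αt i l) * K i t) :=
  stmt_3_general K hK y C e t D hD α αt hα hαtD hαtzero β hβ St2 hattain hconst
end

section
/- Let N, L, n be positive naturals with n ≤ N, T = {1,…,n} (training indices), K ∈ ℝ^{N×N} symmetric positive semidefinite, y : {1,…,N} → {1,…,L}, C : {1,…,N} → ℝ, e ∈ ℝ^{N×L} with e_{il} = 1 − δ_{l,y_i} for i ∈ T. Let D = {α ∈ ℝ^{N×L} : Σ_l α_{il} = 0 ∀i, α_{i,y_i} ≤ C_i, α_{il} ≤ 0 ∀l ≠ y_i} and W(α) = −(1/2)Σ_{i,j}Σ_l α_{il}α_{jl}K_{ij} − Σ_{i,l}α_{il}e_{il}. Let α maximize W over D; set SV₁ = {i : 0 < α_{i,y_i} < C_i} and SV₂ = {i : α_{i,y_i} = C_i}. For each t ∈ T let α^t maximize W over D^t := {α' ∈ D : α'_{tl} = 0 ∀l} and let ŷ_t be a maximizer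 of l ↦ Σ_i α^t_{il} K_{it}; the leave-one-out error count is Err := Card{t ∈ T : ŷ_t ≠ y_t}. Let H = [[K_{SV₁} ⊗ I_L, Aᵀ],[A, 0]] where K_{SV₁} is the principal submatrix of K on SV₁ and A = I_{|SV₁|} ⊗ 1_Lᵀ, and for t ∈ SV₁ let (H^{-1})_{tt} denote the L×L diagonal block of H^{-1} corresponding to t, assumed invertible. Assume: (a) for every t ∈ T with α_{t,y_t} = 0, ŷ_t = y_t; (b) for every t ∈ SV₁ ∩ T, α_tᵀ[(H^{-1})_{tt}]^{-1}α_t = Σ_l α_{tl}·Σ_i (α_{il} − α^t_{il})K_{it}, and moreover ŷ_t ≠ y_t implies Σ_l α_{tl}·Σ_i α^t_{il}K_{it} ≤ 0. Then Err ≤ Card{t ∈ SV₁ ∩ T : α_tᵀ[(H^{-1})_{tt}]^{-1}α_t ≥ Σ_l α_{tl}·Σ_i α_{il}K_{it}} + Card(SV₂ ∩ T). -/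
open Matrix Kronecker

/-!
Since the rows of a feasible `α` sum to zero and are nonpositive off the label,
`0 ≤ α_{t,y_t} ≤ C_t`. A training point misclassified by the leave-one-out machine is
not a non-support vector (hypothesis (a)), so it is a Type-2 support vector or a Type-1
one. In the Type-1 case the span identity writes the span value as the margin
`Σ_l α_{tl} Σ_i α_{il} K_{it}` minus the leave-one-out score `Σ_l α_{tl} Σ_i α^t_{il} K_{it}`,
and a leave-one-out error makes that score nonpositive.
-/

theorem nonneg_of_sum_eq_zero_of_nonpos_of_ne {ι M : Type*} [Fintype ι] [AddCommGroup M]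
    [PartialOrder M] [IsOrderedAddMonoid M] {a : ι → M} (k : ι) (hsum : ∑ l, a l = 0)
    (hne : ∀ l, l ≠ k → a l ≤ 0) : 0 ≤ a k := by
  classical
  have hrest : ∑ l ∈ Finset.univ.erase k, a l ≤ 0 :=
    Finset.sum_nonpos fun l hl => hne l (Finset.ne_of_mem_erase hl)
  rw [← Finset.add_sum_erase _ _ (Finset.mem_univ k)] at hsum
  rw [eq_neg_of_add_eq_zero_left hsum]
  exact neg_nonneg.mpr hrest

theorem margin_le_of_eq_sum_sub_of_nonpos {ι κ R : Type*} [Fintype ι] [Fintype κ] [CommRing R]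
    [PartialOrder R] [IsOrderedAddMonoid R] (a : κ → R) (α α' : ι → κ → R) (k : ι → R) {s : R}
    (hspan : s = ∑ l, a l * ∑ i, (α i l - α' i l) * k i)
    (hscore : ∑ l, a l * ∑ i, α' i l * k i ≤ 0) :
    ∑ l, a l * ∑ i, α i l * k i ≤ s := by
  simp only [hspan, sub_mul, Finset.sum_sub_distrib, mul_sub]
  exact (le_sub_self_iff _).mpr hscore

theorem Set.ncard_le_ncard_add_ncard_of_subset_union {α : Type*} [Finite α] {s t u : Set α}
    (h : s ⊆ t ∪ u) : s.ncard ≤ t.ncard + u.ncard :=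
  (Set.ncard_le_ncard h).trans (Set.ncard_union_le t u)

theorem stmt_6_general {N L : ℕ}
    (T : Set (Fin N))
    (K : Matrix (Fin N) (Fin N) ℝ)
    (y : Fin N → Fin L) (C : Fin N → ℝ)
    (D : Set (Fin N → Fin L → ℝ))
    (hD : D = {a | (∀ i, ∑ l, a i l = 0) ∧ (∀ i, a i (y i) ≤ C i) ∧
      ∀ i, ∀ l, l ≠ y i → a i l ≤ 0})
    (α : Fin N → Fin L → ℝ) (hα : α ∈ D)
    (SV1 SV2 : Set (Fin N))
    (hSV1 : SV1 = {i | 0 < α i (y i) ∧ α i (y i) < C i})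
    (hSV2 : SV2 = {i | α i (y i) = C i})
    (αt : Fin N → Fin N → Fin L → ℝ)
    (yhat : Fin N → Fin L)
    (Err : ℕ) (hErr : Err = Set.ncard {t | t ∈ T ∧ yhat t ≠ y t})
    (B : ↥SV1 → Matrix (Fin L) (Fin L) ℝ)
    (hnonSV : ∀ t ∈ T, α t (y t) = 0 → yhat t = y t)
    (hSV1span : ∀ (t : Fin N) (ht : t ∈ SV1), t ∈ T →
      (α t ⬝ᵥ ((B ⟨t, ht⟩)⁻¹ *ᵥ α t) = ∑ l, α t l * (∑ i, (α i l - αt t i l) * K i t)) ∧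
      (yhat t ≠ y t → ∑ l, α t l * (∑ i, αt t i l * K i t) ≤ 0)) :
    Err ≤ Set.ncard {t : Fin N | ∃ ht : t ∈ SV1, t ∈ T ∧
        ∑ l, α t l * (∑ i, α i l * K i t) ≤ α t ⬝ᵥ ((B ⟨t, ht⟩)⁻¹ *ᵥ α t)}
      + Set.ncard (SV2 ∩ T) := by
  rw [hErr]
  refine Set.ncard_le_ncard_add_ncard_of_subset_union ?_
  rintro t ⟨htT, hwrong⟩
  rw [hD] at hα
  obtain ⟨hsum, hle_C, hnonpos⟩ := hα
  have hpos : 0 < α t (y t) :=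
    (nonneg_of_sum_eq_zero_of_nonpos_of_ne (y t) (hsum t) (hnonpos t)).lt_of_ne'
      fun h => hwrong (hnonSV t htT h)
  rcases (hle_C t).lt_or_eq with hlt | hC
  · have ht1 : t ∈ SV1 := by rw [hSV1]; exact ⟨hpos, hlt⟩
    obtain ⟨hspan, hscore⟩ := hSV1span t ht1 htT
    exact Or.inl ⟨ht1, htT,
      margin_le_of_eq_sum_sub_of_nonpos _ _ _ _ hspan (hscore hwrong)⟩
  · exact Or.inr ⟨by rw [hSV2]; exact hC, htT⟩

/-- Corollary 2 of the MU-SVM paper: the leave-one-out error of the multiclass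
universum SVM is upper bounded by the number of Type-1 support vectors among the
training samples whose span value `α_tᵀ[(H⁻¹)_tt]⁻¹α_t` exceeds
`α_tᵀ Σ_i Σ_l α_{il} K(x_i,x_t)`, plus the number of Type-2 support vectors
among the training samples. -/
theorem stmt_6 {N L n : ℕ} (hN : 0 < N) (hL : 0 < L) (hn : 0 < n) (hnN : n ≤ N)
    (T : Set (Fin N)) (hT : T = {i : Fin N | (i : ℕ) < n})
    (K : Matrix (Fin N) (Fin N) ℝ) (hK : K.PosSemidef)
    (y : Fin N → Fin L) (C : Fin N → ℝ) (e : Fin N → Fin L → ℝ)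
    (he : ∀ i ∈ T, ∀ l, e i l = 1 - (if l = y i then (1 : ℝ) else 0))
    (D : Set (Fin N → Fin L → ℝ))
    (hD : D = {a | (∀ i, ∑ l, a i l = 0) ∧ (∀ i, a i (y i) ≤ C i) ∧
      ∀ i, ∀ l, l ≠ y i → a i l ≤ 0})
    (W : (Fin N → Fin L → ℝ) → ℝ)
    (hW : ∀ a : Fin N → Fin L → ℝ,
      W a = -(1/2) * (∑ i, ∑ j, ∑ l, a i l * a j l * K i j) - ∑ i, ∑ l, a i l * e i l)
    (α : Fin N → Fin L → ℝ) (hα : α ∈ D) (hαmax : ∀ a ∈ D, W a ≤ W α)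
    (SV1 SV2 : Set (Fin N))
    (hSV1 : SV1 = {i | 0 < α i (y i) ∧ α i (y i) < C i})
    (hSV2 : SV2 = {i | α i (y i) = C i})
    (αt : Fin N → Fin N → Fin L → ℝ)
    (hαtD : ∀ t ∈ T, αt t ∈ D ∧ ∀ l, αt t t l = 0)
    (hαtmax : ∀ t ∈ T, ∀ a ∈ D, (∀ l, a t l = 0) → W a ≤ W (αt t))
    (yhat : Fin N → Fin L)
    (hyhat : ∀ t ∈ T, ∀ l, ∑ i, αt t i l * K i t ≤ ∑ i, αt t i (yhat t) * K i t)
    (Err : ℕ) (hErr : Err = Set.ncard {t | t ∈ T ∧ yhat t ≠ y t})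
    [Fintype ↥SV1]
    (A : Matrix ↥SV1 (↥SV1 × Fin L) ℝ)
    (hA : A = Matrix.of fun i jl => if i = jl.1 then (1 : ℝ) else 0)
    (H : Matrix ((↥SV1 × Fin L) ⊕ ↥SV1) ((↥SV1 × Fin L) ⊕ ↥SV1) ℝ)
    (hH : H = Matrix.fromBlocks
      ((Matrix.of fun i j : ↥SV1 => K i j) ⊗ₖ (1 : Matrix (Fin L) (Fin L) ℝ)) Aᵀ A 0)
    (B : ↥SV1 → Matrix (Fin L) (Fin L) ℝ)
    (hB : ∀ s : ↥SV1, B s = Matrix.of fun k l => H⁻¹ (Sum.inl (s, k)) (Sum.inl (s, l)))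
    (hBinv : ∀ s : ↥SV1, IsUnit (B s).det)
    (hnonSV : ∀ t ∈ T, α t (y t) = 0 → yhat t = y t)
    (hSV1span : ∀ (t : Fin N) (ht : t ∈ SV1), t ∈ T →
      (α t ⬝ᵥ ((B ⟨t, ht⟩)⁻¹ *ᵥ α t) = ∑ l, α t l * (∑ i, (α i l - αt t i l) * K i t)) ∧
      (yhat t ≠ y t → ∑ l, α t l * (∑ i, αt t i l * K i t) ≤ 0)) :
    Err ≤ Set.ncard {t : Fin N | ∃ ht : t ∈ SV1, t ∈ T ∧
        ∑ l, α t l * (∑ i, α i l * K i t) ≤ α t ⬝ᵥ ((B ⟨t, ht⟩)⁻¹ *ᵥ α t)}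
      + Set.ncard (SV2 ∩ T) :=
  stmt_6_general T K y C D hD α hα SV1 SV2 hSV1 hSV2 αt yhat Err hErr B hnonSV hSV1span
end

section
/- Let N, L be positive naturals, x₁,…,x_N ∈ ℝ^d, K_{ij} = ⟨x_i, x_j⟩, y : {1,…,N} → {1,…,L}, C : {1,…,N} → ℝ, and e ∈ ℝ^{N×L} with e_{i,y_i} = 0 for all i. Let D = {α ∈ ℝ^{N×L} : Σ_l α_{il} = 0 ∀i, α_{i,y_i} ≤ C_i, α_{il} ≤ 0 ∀l ≠ y_i} and W(α) = −(1/2)Σ_{i,j}Σ_l α_{il}α_{jl}K_{ij} − Σ_{i,l}α_{il}e_{il}. Then for every α ∈ D and every (w, ξ) ∈ (ℝ^d)^L × ℝ^N satisfying ⟨w_{y_i} − w_l, x_i⟩ ≥ e_{il} − ξ_i for all i and l, one has W(α) ≤ (1/2)Σ_{l=1}^L ‖w_l‖² + Σ_{i=1}^N C_i ξ_i. -/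
/-!
Writing `v_l = ∑_i α_{il} x_i`, the kernel term of `W α` is `∑_l ‖v_l‖²`, so
`W α = -½ ∑_l ‖v_l‖² - ∑_{i,l} α_{il} e_{il}`. Pairing each constraint of sample `i` with
`α_{il}` (both nonpositive for `l ≠ y_i`, and `∑_l α_{il} = 0` removes the `w_{y_i}` and `ξ_i`
terms) gives `-C_i ξ_i ≤ ∑_l α_{il} (e_{il} + ⟨w_l, x_i⟩)`. Summing over `i` and using
`⟨w_l, v_l⟩ - ½‖v_l‖² ≤ ½‖w_l‖²` yields the claim.
-/

open Matrix

namespace MUSVM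

lemma neg_mul_le_sum_mul_add {κ : Type*} [Fintype κ] [DecidableEq κ]
    (a e s : κ → ℝ) (y : κ) (C ξ : ℝ)
    (ha : ∑ l, a l = 0) (hay : a y ≤ C) (hal : ∀ l, l ≠ y → a l ≤ 0) (hey : e y = 0)
    (hmargin : ∀ l, s y - s l ≥ e l - ξ) :
    -(C * ξ) ≤ ∑ l, a l * (e l + s l) := by
  have hξ : 0 ≤ ξ := by linarith [hmargin y, hey]
  set t : κ → ℝ := fun l => a l * (e l + s l - s y - ξ)
  have hsum : ∑ l, a l * (e l + s l) = ∑ l, t l := by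
    have : ∑ l, t l = ∑ l, a l * (e l + s l) - (s y + ξ) * ∑ l, a l := by
      simp only [t, Finset.mul_sum, ← Finset.sum_sub_distrib]
      exact Finset.sum_congr rfl fun l _ => by ring
    rw [this, ha, mul_zero, sub_zero]
  have hty : t y = -(a y * ξ) := by simp only [t, hey]; ring
  have hrest : 0 ≤ ∑ l ∈ Finset.univ.erase y, t l :=
    Finset.sum_nonneg fun l hl =>
      mul_nonneg_of_nonpos_of_nonpos (hal l (Finset.ne_of_mem_erase hl))
        (by linarith [hmargin l])
  rw [hsum, ← Finset.add_sum_erase _ t (Finset.mem_univ y), hty]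
  linarith [mul_le_mul_of_nonneg_right hay hξ]

lemma dotProduct_sub_half_le {n : Type*} [Fintype n] (w v : n → ℝ) :
    w ⬝ᵥ v - (1 / 2) * (v ⬝ᵥ v) ≤ (1 / 2) * (w ⬝ᵥ w) := by
  have h := dotProduct_self_star_nonneg (w - v)
  simp only [star_trivial, sub_dotProduct, dotProduct_sub, dotProduct_comm v w] at h
  linarith

variable {ι κ n : Type*} [Fintype ι] [Fintype n]

def dualWeight (x : ι → n → ℝ) (a : ι → κ → ℝ) (l : κ) : n → ℝ := ∑ i, a i l • x i

lemma dualWeight_dotProduct_self (x : ι → n → ℝ) (a : ι → κ → ℝ) (l : κ) :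
    dualWeight x a l ⬝ᵥ dualWeight x a l = ∑ i, ∑ j, a i l * a j l * (x i ⬝ᵥ x j) := by
  simp only [dualWeight, sum_dotProduct, dotProduct_sum, smul_dotProduct, dotProduct_smul,
    smul_eq_mul, Finset.mul_sum]
  refine Finset.sum_comm.trans (Finset.sum_congr rfl fun i _ => Finset.sum_congr rfl fun j _ => ?_)
  rw [dotProduct_comm]
  ring

lemma sum_mul_mul_dotProduct_eq [Fintype κ] (x : ι → n → ℝ) (a : ι → κ → ℝ) :
    ∑ i, ∑ j, ∑ l, a i l * a j l * (x i ⬝ᵥ x j) =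
      ∑ l, dualWeight x a l ⬝ᵥ dualWeight x a l := by
  simp only [dualWeight_dotProduct_self]
  exact (Finset.sum_congr rfl fun i _ => Finset.sum_comm).trans Finset.sum_comm

lemma sum_mul_dotProduct_eq [Fintype κ] (x : ι → n → ℝ) (a : ι → κ → ℝ) (w : κ → n → ℝ) :
    ∑ i, ∑ l, a i l * (w l ⬝ᵥ x i) = ∑ l, w l ⬝ᵥ dualWeight x a l := by
  simp only [dualWeight, dotProduct_sum, dotProduct_smul, smul_eq_mul]
  exact Finset.sum_comm

end MUSVM

open MUSVM in
theorem stmt_11_general {N L d : ℕ}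
    (x : Fin N → Fin d → ℝ)
    (K : Matrix (Fin N) (Fin N) ℝ) (hK : ∀ i j, K i j = x i ⬝ᵥ x j)
    (y : Fin N → Fin L) (C : Fin N → ℝ)
    (e : Fin N → Fin L → ℝ) (he : ∀ i, e i (y i) = 0)
    (D : Set (Fin N → Fin L → ℝ))
    (hD : D = {a | (∀ i, ∑ l, a i l = 0) ∧ (∀ i, a i (y i) ≤ C i) ∧
      ∀ i, ∀ l, l ≠ y i → a i l ≤ 0})
    (W : (Fin N → Fin L → ℝ) → ℝ)
    (hW : ∀ a : Fin N → Fin L → ℝ,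
      W a = -(1/2) * (∑ i, ∑ j, ∑ l, a i l * a j l * K i j) - ∑ i, ∑ l, a i l * e i l)
    (α : Fin N → Fin L → ℝ) (hα : α ∈ D)
    (w : Fin L → Fin d → ℝ) (ξ : Fin N → ℝ)
    (hfeas : ∀ i l, (w (y i) - w l) ⬝ᵥ x i ≥ e i l - ξ i) :
    W α ≤ (1/2) * (∑ l, w l ⬝ᵥ w l) + ∑ i, C i * ξ i := by
  rw [hD] at hα
  obtain ⟨hsum, hCy, hneg⟩ := hα
  set v := dualWeight x α
  have hrow : ∀ i, -(C i * ξ i) ≤ ∑ l, α i l * (e i l + w l ⬝ᵥ x i) := fun i =>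
    neg_mul_le_sum_mul_add (α i) (e i) (fun l => w l ⬝ᵥ x i) (y i) (C i) (ξ i)
      (hsum i) (hCy i) (hneg i) (he i) fun l => by simpa only [sub_dotProduct] using hfeas i l
  have hlinear : -(∑ i, C i * ξ i) ≤ ∑ i, ∑ l, α i l * e i l + ∑ l, w l ⬝ᵥ v l := by
    rw [← sum_mul_dotProduct_eq, ← Finset.sum_add_distrib, ← Finset.sum_neg_distrib]
    refine Finset.sum_le_sum fun i _ => (hrow i).trans_eq ?_
    simp only [mul_add, Finset.sum_add_distrib]
  have hquad : ∑ l, (w l ⬝ᵥ v l - (1 / 2) * (v l ⬝ᵥ v l)) ≤ ∑ l, (1 / 2) * (w l ⬝ᵥ w l) :=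
    Finset.sum_le_sum fun l _ => dotProduct_sub_half_le (w l) (v l)
  simp only [Finset.sum_sub_distrib, ← Finset.mul_sum] at hquad
  rw [hW]
  simp only [hK, sum_mul_mul_dotProduct_eq]
  linarith

/-- Weak duality between the MU-SVM primal (4) on the augmented dataset and its
dual (5), for the linear kernel `K_{ij} = ⟨x_i, x_j⟩`: every dual-feasible `α`
has dual objective at most the primal objective of every primal-feasible `(w, ξ)`. -/
theorem stmt_11 {N L d : ℕ} (hN : 0 < N) (hL : 0 < L)
    (x : Fin N → Fin d → ℝ)
    (K : Matrix (Fin N) (Fin N) ℝ) (hK : ∀ i j, K i j = x i ⬝ᵥ x j)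
    (y : Fin N → Fin L) (C : Fin N → ℝ)
    (e : Fin N → Fin L → ℝ) (he : ∀ i, e i (y i) = 0)
    (D : Set (Fin N → Fin L → ℝ))
    (hD : D = {a | (∀ i, ∑ l, a i l = 0) ∧ (∀ i, a i (y i) ≤ C i) ∧
      ∀ i, ∀ l, l ≠ y i → a i l ≤ 0})
    (W : (Fin N → Fin L → ℝ) → ℝ)
    (hW : ∀ a : Fin N → Fin L → ℝ,
      W a = -(1/2) * (∑ i, ∑ j, ∑ l, a i l * a j l * K i j) - ∑ i, ∑ l, a i l * e i l)
    (α : Fin N → Fin L → ℝ) (hα : α ∈ D)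
    (w : Fin L → Fin d → ℝ) (ξ : Fin N → ℝ)
    (hfeas : ∀ i l, (w (y i) - w l) ⬝ᵥ x i ≥ e i l - ξ i) :
    W α ≤ (1/2) * (∑ l, w l ⬝ᵥ w l) + ∑ i, C i * ξ i :=
  stmt_11_general x K hK y C e he D hD W hW α hα w ξ hfeas
end
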